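/- Breadth-first equivalent-chase derivations do not agree on ranks of common atoms: there exist a factbase F and a ruleset 𝓡 together with two bf-E-derivations D₁ and D₂ from (F,𝓡) and an atom A ∈ F^{D₁} ∩ F^{D₂} with rank_{D₁}(A) ≠ rank_{D₂}(A). A witness is F = {p(z₁), q(z₂)} (z₁, z₂ variables) and 𝓡 the set of unary inclusion rules {p(x)→q(x), q(x)→p(x), q(x)→r(x), p(x)→r(x), r(x)→s(x), r(x)→p(x)}: with h₁ = {x↦z₁} and h₂ = {x↦z₂}, the bf-E-derivation with triggers (R_{pq},h₁),(R_{qr},h₂),(R_{pr},h₁),(R_{rs},h₂),(R_{rp},h₂) produces p(z₂) at rank 2, while the bf-E-derivation with triggers (R_{qp},h₂),(R_{qr},h₂),(R_{rs},h₂) produces p(z₂) at rank 1. -/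

import Mathlib

namespace ChasePaper

/-- Terms are variables or constants, both indexed by natural numbers. -/
inductive Term : Type where
  | var : ℕ → Term
  | const : ℕ → Term
deriving DecidableEq

instance : Encodable Term :=
  Encodable.ofEquiv (ℕ ⊕ ℕ)
    { toFun := fun t => match t with
        | .var n => Sum.inl n
        | .const n => Sum.inr n
      invFun := fun s => match s with
        | .inl n => .var n
        | .inr n => .const n
      left_inv := by intro t; cases t <;> rfl
      right_inv := by intro s; cases s <;> rfl }

/-- An atom is a predicate together with a list of argument terms. -/
structure Atom : Type where
  pred : ℕ
  args : List Term
deriving DecidableEq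

instance : Encodable Atom :=
  Encodable.ofEquiv (ℕ × List Term)
    { toFun := fun A => (A.pred, A.args)
      invFun := fun p => ⟨p.1, p.2⟩
      left_inv := by intro A; rfl
      right_inv := by intro p; rfl }

/-- The variables occurring in a term. -/
def Term.vars : Term → Finset ℕ
  | .var n => {n}
  | .const _ => ∅

/-- The variables occurring in an atom. -/
def Atom.vars (A : Atom) : Finset ℕ := A.args.toFinset.biUnion Term.vars

/-- Applying a substitution to a term. -/
def Term.subst (σ : ℕ → Term) : Term → Term
  | .var n => σ n
  | .const c => .const c

/-- Applying a substitution to an atom. -/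
def Atom.subst (σ : ℕ → Term) (A : Atom) : Atom := ⟨A.pred, A.args.map (Term.subst σ)⟩

/-- The variables occurring in a set of atoms. -/
def setVars (F : Set Atom) : Set ℕ := ⋃ A ∈ F, ↑A.vars

/-- `σ` is a homomorphism from the atomset `F` to the atomset `F'`. -/
def IsHomOn (σ : ℕ → Term) (F F' : Set Atom) : Prop := ∀ A ∈ F, A.subst σ ∈ F'

/-- `σ` is a retraction from `F` to its subset `F'`: it is the identity on the
terms of `F'` and maps `F` onto `F'`. -/
def IsRetraction (σ : ℕ → Term) (F F' : Set Atom) : Prop :=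
  F' ⊆ F ∧ (∀ x ∈ setVars F', σ x = Term.var x) ∧ (Atom.subst σ) '' F = F'

/-- An existential rule, given by its body and its head. -/
structure Rule : Type where
  body : List Atom
  head : List Atom
deriving DecidableEq

instance : Encodable Rule :=
  Encodable.ofEquiv (List Atom × List Atom)
    { toFun := fun R => (R.body, R.head)
      invFun := fun p => ⟨p.1, p.2⟩
      left_inv := by intro R; rfl
      right_inv := by intro p; rfl }

def Rule.bodyVars (R : Rule) : Finset ℕ := R.body.toFinset.biUnion Atom.vars
def Rule.headVars (R : Rule) : Finset ℕ := R.head.toFinset.biUnion Atom.vars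

/-- The frontier of a rule: the variables shared by its body and its head. -/
def Rule.frontier (R : Rule) : Finset ℕ := R.bodyVars ∩ R.headVars

/-- The existential variables of a rule: head variables not occurring in the body. -/
def Rule.existVars (R : Rule) : Finset ℕ := R.headVars \ R.bodyVars

/-- The substitution determined by an association list. -/
def SubL.fn (σ : List (ℕ × Term)) : ℕ → Term := fun n =>
  match σ.find? (fun p => p.1 == n) with
  | some p => p.2
  | none => Term.var n

/-- A trigger: a rule together with a substitution, represented as an association list. -/
structure Trigger : Type where
  rule : Rule
  π : List (ℕ × Term)
deriving DecidableEq

instance : Encodable Trigger :=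
  Encodable.ofEquiv (Rule × List (ℕ × Term))
    { toFun := fun t => (t.rule, t.π)
      invFun := fun p => ⟨p.1, p.2⟩
      left_inv := by intro t; rfl
      right_inv := by intro p; rfl }

/-- The homomorphism π of a trigger, as a substitution. -/
def Trigger.πfn (t : Trigger) : ℕ → Term := SubL.fn t.π

/-- The fresh variable `z_t` associated to trigger `t` and existential variable `z`. -/
def Trigger.freshVar (t : Trigger) (z : ℕ) : Term :=
  Term.var (Nat.pair (Encodable.encode t) z)

/-- The extension `π^s` of `π`, mapping each existential variable of the head to a
fresh variable indexed by the trigger. -/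
def Trigger.πs (t : Trigger) : ℕ → Term := fun n =>
  if n ∈ t.rule.existVars then t.freshVar n else t.πfn n

/-- support(t) = π(body(R)). -/
def Trigger.support (t : Trigger) : Finset Atom :=
  (t.rule.body.map (Atom.subst t.πfn)).toFinset

/-- output(t) = π^s(head(R)). -/
def Trigger.output (t : Trigger) : Finset Atom :=
  (t.rule.head.map (Atom.subst t.πs)).toFinset

/-- A trigger is applicable on a factbase `F` if π maps the rule body into `F`. -/
def Trigger.applicableOn (t : Trigger) (F : Finset Atom) : Prop := t.support ⊆ F

instance (t : Trigger) (F : Finset Atom) : Decidable (t.applicableOn F) :=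
  inferInstanceAs (Decidable (t.support ⊆ F))

/-- The factbase obtained after `i` steps from `F0` along the (partial) sequence
of triggers `ts`. -/
def chainFacts (F0 : Finset Atom) (ts : ℕ → Option Trigger) : ℕ → Finset Atom
  | 0 => F0
  | i + 1 =>
    chainFacts F0 ts i ∪
      (match ts i with
        | some t => t.output
        | none => ∅)

/-- A derivation from the knowledge base `(F0, 𝓡)`: a (possibly infinite) sequence
of pairwise distinct triggers of rules of `𝓡`, each applicable on the factbase
produced so far. -/
structure Derivation (𝓡 : Set Rule) (F0 : Finset Atom) : Type where
  ts : ℕ → Option Trigger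
  mem_rules : ∀ i t, ts i = some t → t.rule ∈ 𝓡
  applic : ∀ i t, ts i = some t → t.applicableOn (chainFacts F0 ts i)
  distinct : ∀ i j t, ts i = some t → ts j = some t → i = j

namespace Derivation

variable {𝓡 : Set Rule} {F0 : Finset Atom}

/-- The factbase `F_i` of the derivation. -/
def facts (D : Derivation 𝓡 F0) (i : ℕ) : Finset Atom := chainFacts F0 D.ts i

/-- `F^D`, the set of all atoms inferred by the derivation. -/
def allFacts (D : Derivation 𝓡 F0) : Set Atom := ⋃ i, ↑(D.facts i)

/-- The set of triggers used by the derivation. -/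
def trigSet (D : Derivation 𝓡 F0) : Set Trigger := {t | ∃ i, D.ts i = some t}

/-- The list of the triggers of `D` at positions `< i`, in order. -/
def hist (D : Derivation 𝓡 F0) (i : ℕ) : List Trigger := (List.range i).filterMap D.ts

def rankAux (D : Derivation 𝓡 F0) : ℕ → Atom → ℕ
  | 0, _ => 0
  | i + 1, A =>
    if A ∈ D.facts i then D.rankAux i A
    else
      match D.ts i with
      | some t => t.support.sup (D.rankAux i) + 1
      | none => 0

open Classical in
/-- The rank of an atom in a derivation (`0` for atoms not inferred by `D`): initial
atoms have rank 0, and an atom produced by a trigger has rank one plus the maximal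
rank of the atoms in the support of this trigger. -/
noncomputable def rank (D : Derivation 𝓡 F0) (A : Atom) : ℕ :=
  if h : ∃ i, A ∈ D.facts i then D.rankAux (Nat.find h) A else 0

/-- The rank of the trigger applied at position `i` (`0` if there is none):
one plus the maximal rank of the atoms of its support. -/
noncomputable def trigRank (D : Derivation 𝓡 F0) (i : ℕ) : ℕ :=
  match D.ts i with
  | some t => t.support.sup D.rank + 1
  | none => 0

/-- The depth of a derivation: the maximal rank of its atoms (possibly `⊤`). -/
noncomputable def depth (D : Derivation 𝓡 F0) : ℕ∞ :=
  ⨆ A ∈ D.allFacts, (D.rank A : ℕ∞)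

/-- Rank-compatibility: later triggers have larger or equal rank. -/
def RankCompatible (D : Derivation 𝓡 F0) : Prop :=
  ∀ i j, i < j → D.ts i ≠ none → D.ts j ≠ none → D.trigRank i ≤ D.trigRank j

/-- Position `i` is a rank mark: the next applied trigger has strictly greater rank. -/
def RankMark (D : Derivation 𝓡 F0) (i : ℕ) : Prop :=
  D.ts i ≠ none ∧
    ∃ j, i < j ∧ D.ts j ≠ none ∧ D.trigRank i < D.trigRank j ∧
      ∀ l, i < l → l < j → D.ts l = none

lemma chainFacts_congr (F0 : Finset Atom) (ts ts' : ℕ → Option Trigger) :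
    ∀ i, (∀ j, j < i → ts' j = ts j) → chainFacts F0 ts' i = chainFacts F0 ts i := by
  intro i
  induction i with
  | zero => intro _; rfl
  | succ i ih =>
    intro h
    have h1 := ih (fun j hj => h j (Nat.lt_succ_of_lt hj))
    have h2 := h i (Nat.lt_succ_self i)
    simp only [chainFacts, h1, h2]

/-- The prefix of `D` keeping only the triggers at positions `< k`. -/
def prefixD (D : Derivation 𝓡 F0) (k : ℕ) : Derivation 𝓡 F0 where
  ts := fun i => if i < k then D.ts i else none
  mem_rules := by
    intro i t h
    by_cases hik : i < k
    · exact D.mem_rules i t (by simpa [hik] using h)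
    · simp [hik] at h
  applic := by
    intro i t h
    by_cases hik : i < k
    · have heq : chainFacts F0 (fun i => if i < k then D.ts i else none) i
          = chainFacts F0 D.ts i :=
        chainFacts_congr F0 D.ts _ i (fun j hj => by
          have hjk : j < k := lt_trans hj hik
          simp [hjk])
      rw [heq]
      exact D.applic i t (by simpa [hik] using h)
    · simp [hik] at h
  distinct := by
    intro i j t hi hj
    by_cases hik : i < k
    · by_cases hjk : j < k
      · exact D.distinct i j t (by simpa [hik] using hi) (by simpa [hjk] using hj)
      · simp [hjk] at hj
    · simp [hik] at hi

/-- `D'` agrees with `D` on all positions `< k`, i.e. `D'` extends the `k`-prefix of `D`. -/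
def ExtendsPrefix (D' D : Derivation 𝓡 F0) (k : ℕ) : Prop :=
  ∀ i, i < k → D'.ts i = D.ts i

/-- Finiteness of a derivation. -/
def IsFinite (D : Derivation 𝓡 F0) : Prop := ∃ N, ∀ i, N ≤ i → D.ts i = none

/-- The atom `A` is produced at step `i` of the derivation. -/
def producedAt (D : Derivation 𝓡 F0) (i : ℕ) (A : Atom) : Prop :=
  A ∈ D.facts (i + 1) ∧ A ∉ D.facts i

/-- Edges of the chase graph of `D`. -/
def edge (D : Derivation 𝓡 F0) (A' A : Atom) : Prop :=
  ∃ i t, D.ts i = some t ∧ D.producedAt i A ∧ A' ∈ t.support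

/-- `A'` is an ancestor of `A`: there is a nonempty path from `A'` to `A` in the
chase graph of `D`. -/
def anc (D : Derivation 𝓡 F0) (A' A : Atom) : Prop := Relation.TransGen D.edge A' A

open Classical in
/-- The prime ancestors of `A`: its ancestors lying in the initial factbase. -/
noncomputable def anc0 (D : Derivation 𝓡 F0) (A : Atom) : Finset Atom :=
  F0.filter (fun A' => D.anc A' A)

/-- The factbases of the restriction of `D` to an initial factbase `G`. -/
def restFacts (D : Derivation 𝓡 F0) (G : Finset Atom) : ℕ → Finset Atom
  | 0 => G
  | i + 1 =>
    restFacts D G i ∪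
      (match D.ts i with
        | some t => if t.applicableOn (restFacts D G i) then t.output else ∅
        | none => ∅)

/-- The trigger sequence of the restriction of `D` to `G`: a trigger of `D` is kept
exactly when it is applicable at the corresponding point. -/
def restTs (D : Derivation 𝓡 F0) (G : Finset Atom) : ℕ → Option Trigger := fun i =>
  match D.ts i with
  | some t => if t.applicableOn (restFacts D G i) then some t else none
  | none => none

lemma restTs_eq_some {D : Derivation 𝓡 F0} {G : Finset Atom} {i : ℕ} {t : Trigger}
    (h : restTs D G i = some t) :
    D.ts i = some t ∧ t.applicableOn (restFacts D G i) := by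
  unfold restTs at h
  cases hd : D.ts i with
  | none => rw [hd] at h; simp at h
  | some t' =>
    rw [hd] at h
    dsimp only at h
    by_cases ha : t'.applicableOn (restFacts D G i)
    · rw [if_pos ha] at h
      injection h with h'
      subst h'
      exact ⟨rfl, ha⟩
    · rw [if_neg ha] at h; simp at h

lemma chainFacts_restTs (D : Derivation 𝓡 F0) (G : Finset Atom) (i : ℕ) :
    chainFacts G (restTs D G) i = restFacts D G i := by
  induction i with
  | zero => rfl
  | succ i ih =>
    simp only [chainFacts, restFacts, ih]
    congr 1
    unfold restTs
    cases hd : D.ts i with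
    | none => rfl
    | some t =>
      by_cases ha : t.applicableOn (restFacts D G i) <;> simp [ha]

/-- The restriction of `D` to the initial factbase `G`: the maximal derivation from
`(G,𝓡)` that only uses the triggers of `D`, in the given order. -/
def restrict (D : Derivation 𝓡 F0) (G : Finset Atom) : Derivation 𝓡 G where
  ts := restTs D G
  mem_rules := fun i t h => D.mem_rules i t (restTs_eq_some h).1
  applic := fun i t h => by
    rw [chainFacts_restTs D G i]
    exact (restTs_eq_some h).2
  distinct := fun i j t hi hj =>
    D.distinct i j t (restTs_eq_some hi).1 (restTs_eq_some hj).1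

end Derivation

/-- An applicability condition: a predicate on (previously applied triggers, current
factbase, candidate trigger). A chase variant is the class of derivations induced by
such a condition. -/
def AppCond : Type := List Trigger → Finset Atom → Trigger → Prop

/-- `D` is an X-derivation of the chase variant given by the condition `C`: every
trigger of `D` is `C`-applicable on the corresponding prefix of `D`. -/
def IsDeriv (C : AppCond) {𝓡 : Set Rule} {F0 : Finset Atom} (D : Derivation 𝓡 F0) : Prop :=
  ∀ i t, D.ts i = some t → C (D.hist i) (D.facts i) t

/-- Oblivious applicability: the trigger is applicable and has not been applied before. -/
def OCond : AppCond := fun h F t => t.applicableOn F ∧ t ∉ h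

/-- Semi-oblivious applicability: no previously applied trigger of the same rule maps
the frontier in the same way. -/
def SOCond : AppCond := fun h F t =>
  t.applicableOn F ∧
    ¬ ∃ t' ∈ h, t'.rule = t.rule ∧ ∀ x ∈ t.rule.frontier, t'.πfn x = t.πfn x

/-- Restricted applicability: there is no retraction from `F ∪ output(t)` to `F`. -/
def RCond : AppCond := fun _ F t =>
  t.applicableOn F ∧
    ¬ ∃ σ : ℕ → Term, IsRetraction σ (↑(F ∪ t.output)) (↑F)

/-- Equivalent-chase applicability: there is no homomorphism from `F ∪ output(t)` to `F`. -/
def ECond : AppCond := fun _ F t =>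
  t.applicableOn F ∧
    ¬ ∃ σ : ℕ → Term, IsHomOn σ (↑(F ∪ t.output)) (↑F)

/-- Breadth-first derivations of the chase variant `C`: rank-compatible `C`-derivations
such that at every rank mark the corresponding prefix cannot be properly extended to a
`C`-derivation of the same depth. -/
def IsBF (C : AppCond) {𝓡 : Set Rule} {F0 : Finset Atom} (D : Derivation 𝓡 F0) : Prop :=
  IsDeriv C D ∧ D.RankCompatible ∧
    ∀ i, D.RankMark i →
      ¬ ∃ D' : Derivation 𝓡 F0, IsDeriv C D' ∧ D'.ExtendsPrefix D (i + 1) ∧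
          (∃ j, i + 1 ≤ j ∧ D'.ts j ≠ none) ∧ D'.depth = (D.prefixD (i + 1)).depth

/-- Fairness of a derivation with respect to the condition `C`: every trigger that
becomes applicable is eventually applied or ceases to be applicable. -/
def IsFair (C : AppCond) {𝓡 : Set Rule} {F0 : Finset Atom} (D : Derivation 𝓡 F0) : Prop :=
  ∀ i t, t.rule ∈ 𝓡 → C (D.hist i) (D.facts i) t →
    ∃ k, i ≤ k ∧ (D.ts k = some t ∨ ¬ C (D.hist (k + 1)) (D.facts (k + 1)) t)

/-- A class of derivations (a chase variant). -/
def DerivClass := ∀ (𝓡 : Set Rule) (F0 : Finset Atom), Derivation 𝓡 F0 → Prop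

/-- The class of `C`-derivations. -/
def derivClassOf (C : AppCond) : DerivClass := fun _ _ D => IsDeriv C D

/-- The class of breadth-first `C`-derivations. -/
def bfClassOf (C : AppCond) : DerivClass := fun _ _ D => IsBF C D

/-- The chase variant `X` preserves ancestry: for every `X`-derivation `D` and atom
`A` inferred (but not initial), there is an `X`-derivation from the prime ancestors
of `A` producing `A` at the same rank. -/
def PreservesAncestry (X : DerivClass) : Prop :=
  ∀ (𝓡 : Set Rule) (F : Finset Atom) (D : Derivation 𝓡 F) (A : Atom),
    X 𝓡 F D → A ∈ D.allFacts → A ∉ F →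
      ∃ D' : Derivation 𝓡 (D.anc0 A),
        X 𝓡 (D.anc0 A) D' ∧ A ∈ D'.allFacts ∧ D'.rank A = D.rank A

/-- The chase variant `X` is hereditary: restricting an `X`-derivation to a subset of
the initial factbase again yields an `X`-derivation. -/
def Hereditary (X : DerivClass) : Prop :=
  ∀ (𝓡 : Set Rule) (F G : Finset Atom), G ⊆ F →
    ∀ D : Derivation 𝓡 F, X 𝓡 F D → X 𝓡 G (D.restrict G)


/- The witness of STATEMENT 19: F = {p(z₁), q(z₂)} with variables z₁, z₂ and the
unary inclusion rules 𝓡 = {p→q, q→p, q→r, p→r, r→s, r→p}; the predicates p, q, r, s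
are encoded as 0, 1, 2, 3, the rule variable x as 0 and z₁, z₂ as 1, 2. -/

/-- The unary inclusion rule p₁(x) → p₂(x). -/
def incl (p₁ p₂ : ℕ) : Rule := ⟨[⟨p₁, [.var 0]⟩], [⟨p₂, [.var 0]⟩]⟩

def z1 : Term := .var 1
def z2 : Term := .var 2

def F19 : Finset Atom := {⟨0, [z1]⟩, ⟨1, [z2]⟩}
def Rs19 : Set Rule := {incl 0 1, incl 1 0, incl 1 2, incl 0 2, incl 2 3, incl 2 0}

/-- x ↦ z₁ -/
def h1 : List (ℕ × Term) := [(0, z1)]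
/-- x ↦ z₂ -/
def h2 : List (ℕ × Term) := [(0, z2)]

/-- The atom p(z₂). -/
def pz2 : Atom := ⟨0, [z2]⟩

/-! In `D₁` the atom p(z₂) is only reached through r(z₂), which has rank 1, so it gets rank 2;
`D₂` derives it directly from the initial atom q(z₂), at rank 1.

Both derivations are breadth-first because at their only rank mark the factbase contains
p(v), q(v) and r(v) for a single variable v, and collapsing every variable onto v is an
endomorphism of it. Hence the output of any trigger of an inclusion rule into p, q or r maps
back into the factbase, so the trigger is not E-applicable; the remaining rule r → s produces
an atom of rank 2 and so increases the depth. -/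

namespace Derivation

variable {𝓡 : Set Rule} {F0 : Finset Atom}

def ofList (l : List Trigger) (hnd : l.Nodup) (hR : ∀ t ∈ l, t.rule ∈ 𝓡)
    (happ : ∀ i (hi : i < l.length), l[i].applicableOn (chainFacts F0 (l[·]?) i)) :
    Derivation 𝓡 F0 where
  ts := (l[·]?)
  mem_rules _ t h := hR t (List.mem_of_getElem? h)
  applic i t h := by
    obtain ⟨hi, rfl⟩ := List.getElem?_eq_some_iff.mp h
    exact happ i hi
  distinct i j t hi hj :=
    (List.getElem?_inj (List.getElem?_eq_some_iff.mp hi).1 hnd).mp (hi.trans hj.symm)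

variable (D : Derivation 𝓡 F0)

lemma lt_of_ts_ne_none {n i : ℕ} (hn : ∀ i, n ≤ i → D.ts i = none) (hi : D.ts i ≠ none) :
    i < n :=
  not_le.mp fun h => hi (hn i h)

lemma facts_succ_of_ts_eq_none {i : ℕ} (h : D.ts i = none) : D.facts (i + 1) = D.facts i := by
  simp only [facts, chainFacts, h, Finset.union_empty]

lemma facts_succ_of_ts_eq_some {i : ℕ} {t : Trigger} (h : D.ts i = some t) :
    D.facts (i + 1) = D.facts i ∪ t.output := by
  simp only [facts, chainFacts, h]

lemma facts_mono : Monotone D.facts :=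
  monotone_nat_of_le_succ fun _ => Finset.subset_union_left

lemma mem_allFacts_of_mem_facts {A : Atom} {i : ℕ} (h : A ∈ D.facts i) : A ∈ D.allFacts :=
  Set.mem_iUnion.mpr ⟨i, h⟩

lemma facts_eq_of_ts_eq_none {k j : ℕ} (hkj : k ≤ j) (h : ∀ l, k ≤ l → l < j → D.ts l = none) :
    D.facts j = D.facts k := by
  induction j, hkj using Nat.le_induction with
  | base => rfl
  | succ j hkj ih =>
    rw [D.facts_succ_of_ts_eq_none (h j hkj j.lt_succ_self),
      ih fun l hkl hlj => h l hkl (hlj.trans j.lt_succ_self)]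

lemma rankAux_eq_of_le {A : Atom} {i j : ℕ} (hA : A ∈ D.facts i) (hij : i ≤ j) :
    D.rankAux j A = D.rankAux i A := by
  induction j, hij using Nat.le_induction with
  | base => rfl
  | succ j hij ih => rw [rankAux, if_pos (D.facts_mono hij hA), ih]

lemma rank_eq_rankAux {A : Atom} {i : ℕ} (hA : A ∈ D.facts i) : D.rank A = D.rankAux i A := by
  classical
  have hex : ∃ i, A ∈ D.facts i := ⟨i, hA⟩
  rw [rank, dif_pos hex, D.rankAux_eq_of_le (Nat.find_spec hex) (Nat.find_min' hex hA)]

lemma sup_rank_support {i : ℕ} {t : Trigger} (h : D.ts i = some t) :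
    t.support.sup D.rank = t.support.sup (D.rankAux i) :=
  Finset.sup_congr rfl fun _ hA => D.rank_eq_rankAux (D.applic i t h hA)

lemma rank_of_mem_output {i : ℕ} {t : Trigger} (h : D.ts i = some t) {A : Atom}
    (hA : A ∈ t.output) (hnew : A ∉ D.facts i) : D.rank A = t.support.sup D.rank + 1 := by
  have hmem : A ∈ D.facts (i + 1) := by
    rw [D.facts_succ_of_ts_eq_some h]
    exact Finset.mem_union_right _ hA
  rw [D.rank_eq_rankAux hmem, rankAux, if_neg hnew, h, D.sup_rank_support h]

/-- A computable form of `trigRank`, so that trigger ranks of concrete derivations can be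
evaluated by `decide`. -/
def trigRankAux (i : ℕ) : ℕ :=
  match D.ts i with
  | some t => t.support.sup (D.rankAux i) + 1
  | none => 0

lemma trigRank_eq_trigRankAux : D.trigRank = D.trigRankAux := by
  funext i
  unfold trigRank trigRankAux
  cases h : D.ts i with
  | none => rfl
  | some t => exact congrArg (· + 1) (D.sup_rank_support h)

lemma rankCompatible_of_trigRankAux {n : ℕ} (hn : ∀ i, n ≤ i → D.ts i = none)
    (h : ∀ j < n, ∀ i < j, D.trigRankAux i ≤ D.trigRankAux j) : D.RankCompatible := by
  intro i j hij _ hj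
  rw [trigRank_eq_trigRankAux]
  exact h j (D.lt_of_ts_ne_none hn hj) i hij

lemma eq_of_rankMark_of_trigRankAux {n m i : ℕ} (hn : ∀ i, n ≤ i → D.ts i = none)
    (h : ∀ j < n, ∀ i < j, D.trigRankAux i < D.trigRankAux j →
      (∀ l < j, i < l → D.ts l = none) → i = m)
    (hi : D.RankMark i) : i = m := by
  obtain ⟨-, j, hij, hj, hlt, hgap⟩ := hi
  rw [trigRank_eq_trigRankAux] at hlt
  exact h j (D.lt_of_ts_ne_none hn hj) i hij hlt fun l hl hil => hgap l hil hl

lemma rank_le_depth {A : Atom} (hA : A ∈ D.allFacts) : (D.rank A : ℕ∞) ≤ D.depth :=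
  le_iSup₂ (f := fun A _ => (D.rank A : ℕ∞)) A hA

lemma extendsPrefix_prefixD (k : ℕ) : (D.prefixD k).ExtendsPrefix D k := fun i hi => by
  simp [prefixD, hi]

variable {D}

lemma ExtendsPrefix.facts_eq {D' : Derivation 𝓡 F0} {k : ℕ} (h : D'.ExtendsPrefix D k) :
    D'.facts k = D.facts k :=
  chainFacts_congr F0 D.ts D'.ts k h

lemma ExtendsPrefix.rankAux_eq {D' : Derivation 𝓡 F0} {k : ℕ} (h : D'.ExtendsPrefix D k) :
    D'.rankAux k = D.rankAux k := by
  induction k with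
  | zero => rfl
  | succ k ih =>
    have h' : D'.ExtendsPrefix D k := fun j hj => h j (hj.trans k.lt_succ_self)
    funext A
    simp only [rankAux, h'.facts_eq, h k k.lt_succ_self, ih h']

lemma ExtendsPrefix.rank_eq {D' : Derivation 𝓡 F0} {k : ℕ} (h : D'.ExtendsPrefix D k)
    {A : Atom} (hA : A ∈ D.facts k) : D'.rank A = D.rank A := by
  rw [D'.rank_eq_rankAux (h.facts_eq ▸ hA), D.rank_eq_rankAux hA, h.rankAux_eq]

variable (D)

lemma facts_prefixD_subset (k i : ℕ) : (D.prefixD k).facts i ⊆ D.facts k := by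
  have hnone : ∀ l, k ≤ l → l < max i k → (D.prefixD k).ts l = none := fun l hkl _ => by
    simp [prefixD, not_lt.mpr hkl]
  calc (D.prefixD k).facts i ⊆ (D.prefixD k).facts (max i k) := facts_mono _ (le_max_left i k)
    _ = (D.prefixD k).facts k := facts_eq_of_ts_eq_none _ (le_max_right i k) hnone
    _ = D.facts k := (D.extendsPrefix_prefixD k).facts_eq

lemma depth_prefixD_le {k n : ℕ} (h : ∀ A ∈ D.facts k, D.rank A ≤ n) :
    (D.prefixD k).depth ≤ n := by
  refine iSup₂_le fun A hA => ?_
  obtain ⟨i, hi⟩ := Set.mem_iUnion.mp hA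
  have hA : A ∈ D.facts k := D.facts_prefixD_subset k i hi
  rw [(D.extendsPrefix_prefixD k).rank_eq hA]
  exact_mod_cast h A hA

theorem not_exists_extension_of_depth_lt (C : AppCond) {k : ℕ}
    (hC : ∀ hist t, t.rule ∈ 𝓡 → C hist (D.facts k) t → t.applicableOn (D.facts k) ∧
      ∃ A ∈ t.output, A ∉ D.facts k ∧ (D.prefixD k).depth < (t.support.sup D.rank + 1 : ℕ)) :
    ¬ ∃ D' : Derivation 𝓡 F0, IsDeriv C D' ∧ D'.ExtendsPrefix D k ∧
      (∃ j, k ≤ j ∧ D'.ts j ≠ none) ∧ D'.depth = (D.prefixD k).depth := by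
  classical
  rintro ⟨D', hD', hext, hnext, hdepth⟩
  obtain ⟨hkj, hj⟩ := Nat.find_spec hnext
  obtain ⟨t, ht⟩ := Option.ne_none_iff_exists'.mp hj
  have hfacts : D'.facts (Nat.find hnext) = D.facts k := by
    refine (D'.facts_eq_of_ts_eq_none hkj fun l hkl hl => ?_).trans hext.facts_eq
    by_contra h
    exact Nat.find_min hnext hl ⟨hkl, h⟩
  have hCt := hD' _ t ht
  rw [hfacts] at hCt
  obtain ⟨happ, A, hA, hnew, hlt⟩ := hC _ t (D'.mem_rules _ t ht) hCt
  have hrank : D'.rank A = t.support.sup D.rank + 1 := by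
    rw [D'.rank_of_mem_output ht hA (hfacts ▸ hnew)]
    congr 1
    exact Finset.sup_congr rfl fun B hB => hext.rank_eq (happ hB)
  have hle := D'.rank_le_depth (D'.mem_allFacts_of_mem_facts
    (D'.facts_succ_of_ts_eq_some ht ▸ Finset.mem_union_right _ hA))
  rw [hrank, hdepth] at hle
  exact not_le.mpr hlt hle

end Derivation

section InclusionRules

variable {t : Trigger} {a b : ℕ}

lemma support_of_rule_eq_incl (h : t.rule = incl a b) : t.support = {⟨a, [t.πfn 0]⟩} := by
  simp [Trigger.support, h, incl, Atom.subst, Term.subst]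

lemma output_of_rule_eq_incl (h : t.rule = incl a b) : t.output = {⟨b, [t.πfn 0]⟩} := by
  simp [Trigger.output, h, incl, Atom.subst, Term.subst, Trigger.πs, Rule.existVars,
    Rule.headVars, Rule.bodyVars, Atom.vars, Term.vars]

/-- Every `b`-atom of `F`, a candidate image of the new atom `b(x)` under a homomorphism, is
excluded by an atom of `F` over `x` whose image would then be missing from `F`. -/
lemma ECond_incl {x : ℕ} {F : Finset Atom} (hist : List Trigger) (ha : ⟨a, [.var x]⟩ ∈ F)
    (hF : ∀ B ∈ F, B.pred = b → ∃ A ∈ F, A.args = [.var x] ∧ ⟨A.pred, B.args⟩ ∉ F) :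
    ECond hist F ⟨incl a b, [(0, .var x)]⟩ := by
  have hsupp := support_of_rule_eq_incl (t := ⟨incl a b, [(0, .var x)]⟩) rfl
  have hout := output_of_rule_eq_incl (t := ⟨incl a b, [(0, .var x)]⟩) rfl
  have hπ : Trigger.πfn ⟨incl a b, [(0, .var x)]⟩ 0 = .var x := rfl
  rw [hπ] at hsupp hout
  refine ⟨by simpa [Trigger.applicableOn, hsupp] using ha, ?_⟩
  rintro ⟨σ, hσ⟩
  have hB : (⟨b, [σ x]⟩ : Atom) ∈ F := hσ ⟨b, [.var x]⟩ (by simp [hout])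
  obtain ⟨A, hA, hAx, hAσ⟩ := hF _ hB rfl
  exact hAσ (by simpa [Atom.subst, hAx, Term.subst] using hσ A (by simp [hA]))

lemma not_ECond_of_endomorphism (σ : ℕ → Term) {F : Finset Atom} (hist : List Trigger)
    (h : t.rule = incl a b) (hσ : ∀ A ∈ F, A.subst σ ∈ F)
    (hb : ∀ B ∈ F, B.pred = a → ⟨b, B.args.map (Term.subst σ)⟩ ∈ F) : ¬ ECond hist F t := by
  rintro ⟨happ, hnohom⟩
  have ha : (⟨a, [t.πfn 0]⟩ : Atom) ∈ F := by
    simpa [Trigger.applicableOn, support_of_rule_eq_incl h] using happ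
  refine hnohom ⟨σ, fun A hA => ?_⟩
  rw [Finset.coe_union, output_of_rule_eq_incl h] at hA
  rcases hA with hA | hA
  · exact hσ A hA
  · rw [Finset.coe_singleton, Set.mem_singleton_iff] at hA
    simpa [hA, Atom.subst] using hb _ ha rfl

end InclusionRules

section Example

def collapse (v : ℕ) : ℕ → Term := fun _ => .var v

lemma rule_eq_incl_two_three_of_ECond {t : Trigger} {F : Finset Atom} {hist : List Trigger}
    {v : ℕ} (hR : t.rule ∈ Rs19) (hσ : ∀ A ∈ F, A.subst (collapse v) ∈ F)
    (hv : ∀ b ≤ 2, ∀ B ∈ F, ⟨b, B.args.map (Term.subst (collapse v))⟩ ∈ F)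
    (hE : ECond hist F t) : t.rule = incl 2 3 := by
  have hblocked : ∀ a b, b ≤ 2 → t.rule ≠ incl a b := fun a b hb h =>
    not_ECond_of_endomorphism (collapse v) hist h hσ (fun B hB _ => hv b hb B hB) hE
  simp only [Rs19, Set.mem_insert_iff, Set.mem_singleton_iff] at hR
  rcases hR with h | h | h | h | h | h
  exacts [absurd h (hblocked 0 1 (by omega)), absurd h (hblocked 1 0 (by omega)),
    absurd h (hblocked 1 2 le_rfl), absurd h (hblocked 0 2 le_rfl), h,
    absurd h (hblocked 2 0 (by omega))]

theorem not_exists_extension_of_Rs19 (D : Derivation Rs19 F19) (k v : ℕ)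
    (hσ : ∀ A ∈ D.facts k, A.subst (collapse v) ∈ D.facts k)
    (hv : ∀ b ≤ 2, ∀ B ∈ D.facts k, ⟨b, B.args.map (Term.subst (collapse v))⟩ ∈ D.facts k)
    (hs : ∀ A ∈ D.facts k, A.pred ≠ 3)
    (hrank : ∀ A ∈ D.facts k, D.rankAux k A ≤ 1 ∧ (A.pred = 2 → 1 ≤ D.rankAux k A)) :
    ¬ ∃ D' : Derivation Rs19 F19, IsDeriv ECond D' ∧ D'.ExtendsPrefix D k ∧
      (∃ j, k ≤ j ∧ D'.ts j ≠ none) ∧ D'.depth = (D.prefixD k).depth := by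
  refine D.not_exists_extension_of_depth_lt ECond fun hist t hR hE => ?_
  have hrule := rule_eq_incl_two_three_of_ECond hR hσ hv hE
  have hr : (⟨2, [t.πfn 0]⟩ : Atom) ∈ D.facts k := by
    simpa [Trigger.applicableOn, support_of_rule_eq_incl hrule] using hE.1
  refine ⟨hE.1, ⟨3, [t.πfn 0]⟩, by simp [output_of_rule_eq_incl hrule], fun h => hs _ h rfl, ?_⟩
  have hdepth : (D.prefixD k).depth ≤ 1 :=
    D.depth_prefixD_le fun A hA => D.rank_eq_rankAux hA ▸ (hrank A hA).1
  have hpos : 1 ≤ D.rank ⟨2, [t.πfn 0]⟩ := D.rank_eq_rankAux hr ▸ (hrank _ hr).2 rfl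
  rw [support_of_rule_eq_incl hrule, Finset.sup_singleton]
  exact hdepth.trans_lt (by exact_mod_cast Nat.lt_succ_of_le hpos)

def triggers₁ : List Trigger :=
  [⟨incl 0 1, h1⟩, ⟨incl 1 2, h2⟩, ⟨incl 0 2, h1⟩, ⟨incl 2 3, h2⟩, ⟨incl 2 0, h2⟩]

def triggers₂ : List Trigger := [⟨incl 1 0, h2⟩, ⟨incl 1 2, h2⟩, ⟨incl 2 3, h2⟩]

def D₁ : Derivation Rs19 F19 :=
  .ofList triggers₁ (by decide) (by simp [triggers₁, Rs19]) (by decide)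

def D₂ : Derivation Rs19 F19 :=
  .ofList triggers₂ (by decide) (by simp [triggers₂, Rs19]) (by decide)

lemma ts_D₁_eq_none : ∀ i, 5 ≤ i → D₁.ts i = none :=
  fun _ => List.getElem?_eq_none (l := triggers₁)

lemma ts_D₂_eq_none : ∀ i, 3 ≤ i → D₂.ts i = none :=
  fun _ => List.getElem?_eq_none (l := triggers₂)

lemma isDeriv_D₁ : IsDeriv ECond D₁ := by
  intro i t ht
  have hi : i < 5 := D₁.lt_of_ts_ne_none ts_D₁_eq_none (ht ▸ Option.some_ne_none t)
  interval_cases i <;> obtain rfl := Option.some.inj ht <;>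
    exact ECond_incl _ (by decide) (by decide)

lemma isDeriv_D₂ : IsDeriv ECond D₂ := by
  intro i t ht
  have hi : i < 3 := D₂.lt_of_ts_ne_none ts_D₂_eq_none (ht ▸ Option.some_ne_none t)
  interval_cases i <;> obtain rfl := Option.some.inj ht <;>
    exact ECond_incl _ (by decide) (by decide)

lemma isBF_D₁ : IsBF ECond D₁ := by
  refine ⟨isDeriv_D₁, D₁.rankCompatible_of_trigRankAux ts_D₁_eq_none (by decide), fun i hi => ?_⟩
  obtain rfl := D₁.eq_of_rankMark_of_trigRankAux (m := 2) ts_D₁_eq_none (by decide) hi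
  exact not_exists_extension_of_Rs19 D₁ 3 1 (by decide) (by decide) (by decide) (by decide)

lemma isBF_D₂ : IsBF ECond D₂ := by
  refine ⟨isDeriv_D₂, D₂.rankCompatible_of_trigRankAux ts_D₂_eq_none (by decide), fun i hi => ?_⟩
  obtain rfl := D₂.eq_of_rankMark_of_trigRankAux (m := 1) ts_D₂_eq_none (by decide) hi
  exact not_exists_extension_of_Rs19 D₂ 2 2 (by decide) (by decide) (by decide) (by decide)
lemma pz2_mem_facts_D₁ : pz2 ∈ D₁.facts 5 := by decide

lemma pz2_mem_facts_D₂ : pz2 ∈ D₂.facts 1 := by decide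

lemma rank_pz2_D₁ : D₁.rank pz2 = 2 := by
  rw [D₁.rank_eq_rankAux pz2_mem_facts_D₁]
  decide

lemma rank_pz2_D₂ : D₂.rank pz2 = 1 := by
  rw [D₂.rank_eq_rankAux pz2_mem_facts_D₂]
  decide

end Example

/-- two breadth-first equivalent-chase derivations from the same
knowledge base may produce a common atom at different ranks: D₁ applies
(R_pq,h₁), (R_qr,h₂), (R_pr,h₁), (R_rs,h₂), (R_rp,h₂) and produces p(z₂) at rank 2,
while D₂ applies (R_qp,h₂), (R_qr,h₂), (R_rs,h₂) and produces p(z₂) at rank 1. -/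
theorem statement19 :
    ∃ D₁ D₂ : Derivation Rs19 F19,
      D₁.ts 0 = some ⟨incl 0 1, h1⟩ ∧ D₁.ts 1 = some ⟨incl 1 2, h2⟩ ∧
      D₁.ts 2 = some ⟨incl 0 2, h1⟩ ∧ D₁.ts 3 = some ⟨incl 2 3, h2⟩ ∧
      D₁.ts 4 = some ⟨incl 2 0, h2⟩ ∧ (∀ i, 5 ≤ i → D₁.ts i = none) ∧
      D₂.ts 0 = some ⟨incl 1 0, h2⟩ ∧ D₂.ts 1 = some ⟨incl 1 2, h2⟩ ∧
      D₂.ts 2 = some ⟨incl 2 3, h2⟩ ∧ (∀ i, 3 ≤ i → D₂.ts i = none) ∧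
      IsBF ECond D₁ ∧ IsBF ECond D₂ ∧
      pz2 ∈ D₁.allFacts ∧ pz2 ∈ D₂.allFacts ∧
      D₁.rank pz2 = 2 ∧ D₂.rank pz2 = 1 ∧ D₁.rank pz2 ≠ D₂.rank pz2 := by
  refine ⟨D₁, D₂, rfl, rfl, rfl, rfl, rfl, ts_D₁_eq_none, rfl, rfl, rfl, ts_D₂_eq_none,
    isBF_D₁, isBF_D₂,
    D₁.mem_allFacts_of_mem_facts pz2_mem_facts_D₁, D₂.mem_allFacts_of_mem_facts pz2_mem_facts_D₂,
    rank_pz2_D₁, rank_pz2_D₂, ?_⟩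
  rw [rank_pz2_D₁, rank_pz2_D₂]
  decide

end ChasePaper
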